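/- Let M be a deterministic program with high-security input H, low-security input L, and low-security output O, and let μ be a probability distribution on ℍ × 𝕃 with μ(h,ℓ) > 0 for all h ∈ ℍ and ℓ ∈ 𝕃. Then M is non-interferent if and only if ME[μ](M) ≤ 0. -/
import Mathlib


/-!
Statement 1: For a deterministic program `M : ℍ × 𝕃 → 𝕆` and a probability
distribution `μ` on `ℍ × 𝕃` with `μ(h,ℓ) > 0` everywhere, `M` is non-interferent
iff `ME[μ](M) ≤ 0`, where `ME[μ](M) = 𝓗∞[μ](H|L) − 𝓗∞[μ](H|O,L)`.
-/

variable {Hi Li Oi : Type*}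

/-- Marginal probability `μ(L = ℓ)`. -/
noncomputable def pL [Fintype Hi] (μ : Hi × Li → ℝ) (ℓ : Li) : ℝ := ∑ h, μ (h, ℓ)

/-- Joint probability `μ(O = o, L = ℓ)` where `O = M(H,L)`. -/
noncomputable def pOL [Fintype Hi] [DecidableEq Oi] (M : Hi × Li → Oi) (μ : Hi × Li → ℝ)
    (o : Oi) (ℓ : Li) : ℝ := ∑ h, if M (h, ℓ) = o then μ (h, ℓ) else 0

/-- Conditional vulnerability `𝓥[μ](H|L) = Σ_ℓ μ(L=ℓ) · max_h μ(H=h|L=ℓ)`. -/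
noncomputable def VHL [Fintype Hi] [Fintype Li] [Nonempty Hi] (μ : Hi × Li → ℝ) : ℝ :=
  ∑ ℓ : Li, pL μ ℓ *
    Finset.univ.sup' Finset.univ_nonempty (fun h : Hi => μ (h, ℓ) / pL μ ℓ)

/-- Conditional vulnerability `𝓥[μ](H|O,L)` where `O = M(H,L)`. -/
noncomputable def VHOL [Fintype Hi] [Fintype Li] [Fintype Oi] [DecidableEq Oi] [Nonempty Hi]
    (M : Hi × Li → Oi) (μ : Hi × Li → ℝ) : ℝ :=
  ∑ ℓ : Li, ∑ o : Oi, pOL M μ o ℓ *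
    Finset.univ.sup' Finset.univ_nonempty
      (fun h : Hi => (if M (h, ℓ) = o then μ (h, ℓ) else 0) / pOL M μ o ℓ)

/-- Min-entropy-based quantitative information flow
`ME[μ](M) = 𝓗∞[μ](H|L) − 𝓗∞[μ](H|O,L)` with `𝓗∞[μ](X|Y) = log₂(1/𝓥[μ](X|Y))`. -/
noncomputable def ME [Fintype Hi] [Fintype Li] [Fintype Oi] [DecidableEq Oi] [Nonempty Hi]
    (M : Hi × Li → Oi) (μ : Hi × Li → ℝ) : ℝ :=
  Real.logb 2 (1 / VHL μ) - Real.logb 2 (1 / VHOL M μ)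

private lemma sup'_div_const [Fintype Hi] [Nonempty Hi] (f : Hi → ℝ) (c : ℝ) (hc : 0 ≤ c) :
    Finset.univ.sup' Finset.univ_nonempty (fun h => f h / c)
      = (Finset.univ.sup' Finset.univ_nonempty f) / c :=
  (Finset.comp_sup'_eq_sup'_comp Finset.univ_nonempty (fun x : ℝ => x / c)
    (fun x y => (max_div_div_right hc x y).symm)).symm

/-- A program is non-interferent iff `ME[μ](M) ≤ 0` (for any everywhere-positive
distribution `μ`). -/
theorem noninterferent_iff_ME_le_zero
    [Fintype Hi] [Fintype Li] [Fintype Oi] [DecidableEq Oi] [Nonempty Hi] [Nonempty Li]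
    (M : Hi × Li → Oi) (μ : Hi × Li → ℝ)
    (hpos : ∀ x, 0 < μ x) (hsum : ∑ x, μ x = 1) :
    (∀ (h h' : Hi) (ℓ : Li), M (h, ℓ) = M (h', ℓ)) ↔ ME M μ ≤ 0 := by
  classical
  set A : Li → ℝ := fun ℓ => Finset.univ.sup' Finset.univ_nonempty
      (fun h : Hi => μ (h, ℓ)) with hA
  set B : Oi → Li → ℝ := fun o ℓ => Finset.univ.sup' Finset.univ_nonempty
      (fun h : Hi => if M (h, ℓ) = o then μ (h, ℓ) else 0) with hB
  have hpL : ∀ ℓ, 0 < pL μ ℓ := fun ℓ =>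
    Finset.sum_pos (fun h _ => hpos _) Finset.univ_nonempty
  have hgnn : ∀ (o : Oi) (ℓ : Li) (h : Hi),
      0 ≤ (if M (h, ℓ) = o then μ (h, ℓ) else 0) := by
    intro o ℓ h; split
    · exact (hpos _).le
    · exact le_refl 0
  have hVHL : VHL μ = ∑ ℓ, A ℓ := by
    unfold VHL
    refine Finset.sum_congr rfl fun ℓ _ => ?_
    rw [sup'_div_const _ _ (hpL ℓ).le, mul_div_cancel₀ _ (hpL ℓ).ne']
  have hApos : ∀ ℓ, 0 < A ℓ := fun ℓ =>
    lt_of_lt_of_le (hpos (Classical.arbitrary Hi, ℓ))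
      (Finset.le_sup' (fun h : Hi => μ (h, ℓ)) (Finset.mem_univ _))
  have hBnn : ∀ o ℓ, 0 ≤ B o ℓ := fun o ℓ =>
    le_trans (hgnn o ℓ (Classical.arbitrary Hi))
      (Finset.le_sup' (fun h : Hi => if M (h, ℓ) = o then μ (h, ℓ) else 0)
        (Finset.mem_univ (Classical.arbitrary Hi)))
  have hBle : ∀ (h : Hi) (ℓ : Li), μ (h, ℓ) ≤ B (M (h, ℓ)) ℓ := by
    intro h ℓ
    have h1 : (if M (h, ℓ) = M (h, ℓ) then μ (h, ℓ) else 0) ≤ B (M (h, ℓ)) ℓ :=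
      Finset.le_sup' (fun h' : Hi => if M (h', ℓ) = M (h, ℓ) then μ (h', ℓ) else 0)
        (Finset.mem_univ h)
    rwa [if_pos rfl] at h1
  have hVHOL : VHOL M μ = ∑ ℓ, ∑ o, B o ℓ := by
    unfold VHOL
    refine Finset.sum_congr rfl fun ℓ _ => Finset.sum_congr rfl fun o _ => ?_
    by_cases hp : pOL M μ o ℓ = 0
    · have hg : ∀ h : Hi, (if M (h, ℓ) = o then μ (h, ℓ) else 0) = 0 := by
        intro h
        have := (Finset.sum_eq_zero_iff_of_nonneg (fun h _ => hgnn o ℓ h)).mp hp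
        exact this h (Finset.mem_univ h)
      have hBz : B o ℓ = 0 := by
        show Finset.univ.sup' Finset.univ_nonempty
          (fun h : Hi => if M (h, ℓ) = o then μ (h, ℓ) else 0) = 0
        rw [Finset.sup'_congr Finset.univ_nonempty rfl (fun h _ => hg h)]
        exact Finset.sup'_const _ 0
      simp [hp, hBz]
    · have hp' : 0 < pOL M μ o ℓ :=
        lt_of_le_of_ne (Finset.sum_nonneg fun h _ => hgnn o ℓ h) (Ne.symm hp)
      rw [sup'_div_const _ _ hp'.le, mul_div_cancel₀ _ hp]
  have hkey : ∀ ℓ, A ℓ ≤ ∑ o, B o ℓ := by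
    intro ℓ
    obtain ⟨h₀, -, hh₀⟩ := Finset.exists_mem_eq_sup' (f := fun h : Hi => μ (h, ℓ))
      (Finset.univ_nonempty)
    calc A ℓ = μ (h₀, ℓ) := hh₀
      _ ≤ B (M (h₀, ℓ)) ℓ := hBle h₀ ℓ
      _ ≤ ∑ o, B o ℓ :=
        Finset.single_le_sum (fun o _ => hBnn o ℓ) (Finset.mem_univ _)
  have hle : VHL μ ≤ VHOL M μ := by
    rw [hVHL, hVHOL]
    exact Finset.sum_le_sum fun ℓ _ => hkey ℓ
  have hVHLpos : 0 < VHL μ := by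
    rw [hVHL]
    exact Finset.sum_pos (fun ℓ _ => hApos ℓ) Finset.univ_nonempty
  have hVHOLpos : 0 < VHOL M μ := lt_of_lt_of_le hVHLpos hle
  have hME : ME M μ ≤ 0 ↔ VHOL M μ ≤ VHL μ := by
    unfold ME
    rw [one_div, one_div, Real.logb_inv, Real.logb_inv, sub_le_iff_le_add, zero_add,
      neg_le_neg_iff]
    exact Real.logb_le_logb one_lt_two hVHOLpos hVHLpos
  rw [hME]
  constructor
  · intro hni
    have heq : ∀ ℓ, ∑ o, B o ℓ = A ℓ := by
      intro ℓ
      set o₀ := M (Classical.arbitrary Hi, ℓ) with ho₀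
      have hMo : ∀ h : Hi, M (h, ℓ) = o₀ := fun h => hni h _ ℓ
      have hBo : ∀ o, B o ℓ = if o = o₀ then A ℓ else 0 := by
        intro o
        by_cases ho : o = o₀
        · subst ho
          rw [if_pos rfl]
          show Finset.univ.sup' Finset.univ_nonempty
            (fun h : Hi => if M (h, ℓ) = o₀ then μ (h, ℓ) else 0)
            = Finset.univ.sup' Finset.univ_nonempty (fun h : Hi => μ (h, ℓ))
          exact Finset.sup'_congr Finset.univ_nonempty rfl
            (fun h _ => by rw [if_pos (hMo h)])
        · rw [if_neg ho]
          show Finset.univ.sup' Finset.univ_nonempty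
            (fun h : Hi => if M (h, ℓ) = o then μ (h, ℓ) else 0) = 0
          rw [Finset.sup'_congr Finset.univ_nonempty rfl
            (fun h _ => by rw [if_neg (fun hc => ho ((hMo h).symm.trans hc).symm)])]
          exact Finset.sup'_const _ 0
      rw [Finset.sum_congr rfl fun o _ => hBo o]
      simp
    rw [hVHOL, hVHL]
    exact le_of_eq (Finset.sum_congr rfl fun ℓ _ => heq ℓ)
  · intro hle2 h h' ℓ
    by_contra hne
    have hstrict : A ℓ < ∑ o, B o ℓ := by
      obtain ⟨h₀, -, hh₀⟩ := Finset.exists_mem_eq_sup' (f := fun h : Hi => μ (h, ℓ))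
        (Finset.univ_nonempty)
      have hex : ∃ h₂ : Hi, M (h₂, ℓ) ≠ M (h₀, ℓ) := by
        by_cases hc : M (h, ℓ) = M (h₀, ℓ)
        · exact ⟨h', fun hc' => hne (hc.trans hc'.symm)⟩
        · exact ⟨h, hc⟩
      obtain ⟨h₂, hne₂⟩ := hex
      have hsub : {M (h₀, ℓ), M (h₂, ℓ)} ⊆ (Finset.univ : Finset Oi) := by
        intro o _; exact Finset.mem_univ o
      have hpair : B (M (h₀, ℓ)) ℓ + B (M (h₂, ℓ)) ℓ ≤ ∑ o, B o ℓ := by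
        have h3 := Finset.sum_le_sum_of_subset_of_nonneg hsub fun o _ _ => hBnn o ℓ
        rwa [Finset.sum_pair (Ne.symm hne₂)] at h3
      have h1 : A ℓ ≤ B (M (h₀, ℓ)) ℓ := by
        calc A ℓ = μ (h₀, ℓ) := hh₀
          _ ≤ _ := hBle h₀ ℓ
      have h2 : 0 < B (M (h₂, ℓ)) ℓ := lt_of_lt_of_le (hpos _) (hBle h₂ ℓ)
      linarith
    have : VHL μ < VHOL M μ := by
      rw [hVHL, hVHOL]
      exact Finset.sum_lt_sum (fun i _ => hkey i) ⟨ℓ, Finset.mem_univ ℓ, hstrict⟩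
    linarith
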